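/- arXiv:1305.6502 — 3 statements merged into one kernel-verified Lean document; each statement's English description precedes it below -/
import Mathlib

section
/- Let Ψ be a branching mechanism and let u be a flow for Ψ. Let t ≥ 0 and λ > 0 be such that Ψ(λ) ≠ 0. Then Ψ does not vanish on the closed interval with endpoints u(t,λ) and λ, and the interval integral ∫_{u(t,λ)}^{λ} dw/Ψ(w) equals t. -/
open MeasureTheory Set Filter Topology
open scoped ENNReal NNReal

/-- The Lévy–Khintchine shape of a branching mechanism:
`Ψ(λ) = αλ + βλ² + ∫_{(0,∞)} (e^{−λr} − 1 + λr·1_{r<1}) π(dr)`. -/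
noncomputable def psiShape (a b : ℝ) (piM : Measure ℝ) (l : ℝ) : ℝ :=
  a * l + b * l ^ 2 +
    ∫ r, (Real.exp (-l * r) - 1 + (if r < 1 then l * r else 0)) ∂piM

/-- `Ψ` is a branching mechanism with parameters `a = α`, `b = β` and Lévy measure `piM = π`:
`β ≥ 0`, `π` is carried by `(0,∞)`, `∫ (1 ∧ r²) π(dr) < ∞`, and `Ψ` has the
Lévy–Khintchine form on `[0,∞)`. -/
def IsBranchingMechanism (Ψ : ℝ → ℝ) (a b : ℝ) (piM : Measure ℝ) : Prop :=
  0 ≤ b ∧ piM (Set.Ioi (0:ℝ))ᶜ = 0 ∧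
    (∫⁻ r, ENNReal.ofReal (min 1 (r ^ 2)) ∂piM) < ⊤ ∧
    ∀ l, 0 ≤ l → Ψ l = psiShape a b piM l

/-- Non-linearity of the branching mechanism: `β > 0` or `π ≠ 0`. -/
def IsNonLinear (b : ℝ) (piM : Measure ℝ) : Prop := 0 < b ∨ piM ≠ 0

/-- Finite variation type: `β = 0` and `∫_{(0,1)} r π(dr) < ∞`. -/
def FiniteVariationType (b : ℝ) (piM : Measure ℝ) : Prop :=
  b = 0 ∧ (∫⁻ r in Set.Ioo (0:ℝ) 1, ENNReal.ofReal r ∂piM) < ⊤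

/-- The drift constant `D = α + ∫_{(0,1)} r π(dr)` (finite variation cases). -/
noncomputable def Dconst (a : ℝ) (piM : Measure ℝ) : ℝ :=
  a + ∫ r in Set.Ioo (0:ℝ) 1, r ∂piM

/-- `u` is a flow for `Ψ`: for every `λ > 0`, `u(0,λ) = λ`, `u(t,λ) > 0` and
`∂_t u(t,λ) = −Ψ(u(t,λ))` on `[0,∞)`. -/
def IsFlow (Ψ : ℝ → ℝ) (u : ℝ → ℝ → ℝ) : Prop :=
  (∀ l, 0 < l → u 0 l = l) ∧
  (∀ l, 0 < l → ∀ t, 0 ≤ t → 0 < u t l) ∧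
  (∀ l, 0 < l → ∀ t, 0 ≤ t →
    HasDerivWithinAt (fun s => u s l) (-(Ψ (u t l))) (Set.Ici 0) t)

/-!
On `(0,∞)` the branching mechanism is locally Lipschitz: the `λ`-derivative of the Lévy
integrand is dominated by `C (1 ∧ r²)` locally uniformly in `λ > 0`. By uniqueness for the ODE
`∂ₜu = -Ψ(u)`, a flow line that reaches a zero of `Ψ` has been sitting at it all along; since
`Ψ(λ) ≠ 0`, `Ψ` never vanishes on `s ↦ u(s,λ)`, `s ∈ [0,t]`, whose image covers the interval
between `u(t,λ)` and `λ`. The substitution `w = u(s,λ)` then turns `∫ dw/Ψ(w)` into `∫₀ᵗ ds`.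
-/

theorem ODE_solution_eqOn_const_of_apply_eq_zero {E : Type*} [NormedAddCommGroup E]
    [NormedSpace ℝ E] {v : E → E} {f : ℝ → E} {U : Set E} {a b : ℝ}
    (hv : LocallyLipschitzOn U v) (hf : ContinuousOn f (Icc a b))
    (hf' : ∀ τ ∈ Ioc a b, HasDerivAt f (v (f τ)) τ) (hfU : MapsTo f (Icc a b) U)
    (hb : v (f b) = 0) :
    EqOn f (fun _ ↦ f b) (Icc a b) := by
  obtain ⟨K, hK⟩ := (hv.mono (image_subset_iff.2 hfU)).exists_lipschitzOnWith_of_compact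
    (isCompact_Icc.image_of_continuousOn hf)
  refine ODE_solution_unique_of_mem_Icc_left (v := fun _ ↦ v) (s := fun _ ↦ f '' Icc a b)
    (fun _ _ ↦ hK) hf (fun τ hτ ↦ (hf' τ hτ).hasDerivWithinAt)
    (fun τ hτ ↦ mem_image_of_mem f (Ioc_subset_Icc_self hτ)) continuousOn_const
    (fun τ _ ↦ hb ▸ hasDerivWithinAt_const τ _ (f b))
    (fun τ hτ ↦ mem_image_of_mem f ⟨(hτ.1.trans_le hτ.2).le, le_rfl⟩) rfl

theorem integral_inv_eq_sub_of_hasDerivAt {v f : ℝ → ℝ} {a b : ℝ} (hab : a ≤ b)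
    (hf : ContinuousOn f (Icc a b)) (hf' : ∀ τ ∈ Ioo a b, HasDerivAt f (v (f τ)) τ)
    (hv : ContinuousOn v (f '' Icc a b)) (hv0 : ∀ τ ∈ Icc a b, v (f τ) ≠ 0) :
    ∫ w in f a..f b, (v w)⁻¹ = b - a := by
  rw [← uIcc_of_le hab] at hf hv hv0
  rw [← intervalIntegral.integral_comp_mul_deriv'' (g := fun w ↦ (v w)⁻¹) hf
    (fun τ hτ ↦ (hf' τ (by simpa [hab] using hτ)).hasDerivWithinAt)
    (hv.comp hf (mapsTo_image f _)) (hv.inv₀ (forall_mem_image.2 hv0))]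
  calc ∫ τ in a..b, ((fun w ↦ (v w)⁻¹) ∘ f) τ * v (f τ) = ∫ _ in a..b, (1 : ℝ) :=
        intervalIntegral.integral_congr fun τ hτ ↦ inv_mul_cancel₀ (hv0 τ hτ)
    _ = b - a := by simp

noncomputable def levyIntegrand (l r : ℝ) : ℝ :=
  Real.exp (-l * r) - 1 + if r < 1 then l * r else 0

theorem measurable_levyIntegrand (l : ℝ) : Measurable (levyIntegrand l) := by
  unfold levyIntegrand
  exact (by fun_prop : Measurable fun r ↦ Real.exp (-l * r) - 1).add
    (Measurable.ite measurableSet_Iio (by fun_prop) measurable_const)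

theorem exp_neg_sub_one_add_le_sq {x : ℝ} (hx : 0 ≤ x) : Real.exp (-x) - 1 + x ≤ x ^ 2 := by
  rcases le_or_gt x 1 with hx1 | hx1
  · have := Real.abs_exp_sub_one_sub_id_le (x := -x) (by rwa [abs_neg, abs_of_nonneg hx])
    linarith [(abs_le.1 this).2, neg_sq x]
  · nlinarith [Real.exp_le_one_iff.2 (neg_nonpos.2 hx)]

theorem abs_levyIntegrand_le {l r : ℝ} (hl : 0 ≤ l) (hr : 0 < r) :
    |levyIntegrand l r| ≤ max 1 (l ^ 2) * min 1 (r ^ 2) := by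
  have hexp : Real.exp (-l * r) ≤ 1 := Real.exp_le_one_iff.2 (by nlinarith)
  unfold levyIntegrand
  split_ifs with h
  · have hlr : 0 ≤ l * r := by positivity
    have hlow := Real.add_one_le_exp (-l * r)
    have hup := exp_neg_sub_one_add_le_sq hlr
    rw [min_eq_right (by nlinarith), abs_of_nonneg (by linarith), neg_mul]
    nlinarith [le_max_right 1 (l ^ 2), sq_nonneg r]
  · rw [min_eq_left (by nlinarith), abs_le]
    constructor <;> nlinarith [le_max_left 1 (l ^ 2), Real.exp_pos (-l * r)]

theorem integrable_min_one_sq {piM : Measure ℝ}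
    (hfin : ∫⁻ r, ENNReal.ofReal (min 1 (r ^ 2)) ∂piM < ⊤) :
    Integrable (fun r ↦ min 1 (r ^ 2)) piM :=
  ⟨by fun_prop, (hasFiniteIntegral_iff_ofReal (.of_forall fun r ↦ by positivity)).2 hfin⟩

theorem integrable_levyIntegrand {piM : Measure ℝ} (hcarr : piM (Ioi 0)ᶜ = 0)
    (hfin : ∫⁻ r, ENNReal.ofReal (min 1 (r ^ 2)) ∂piM < ⊤) {l : ℝ} (hl : 0 ≤ l) :
    Integrable (levyIntegrand l) piM := by
  refine ((integrable_min_one_sq hfin).const_mul (max 1 (l ^ 2))).mono'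
    (measurable_levyIntegrand l).aestronglyMeasurable ?_
  filter_upwards [mem_ae_iff.2 hcarr] with r hr
  exact abs_levyIntegrand_le hl hr

theorem hasDerivAt_levyIntegrand (l r : ℝ) :
    HasDerivAt (levyIntegrand · r) (-r * Real.exp (-l * r) + if r < 1 then r else 0) l := by
  have hexp : HasDerivAt (fun l ↦ Real.exp (-l * r) - 1) (Real.exp (-l * r) * -r) l := by
    simpa using (((hasDerivAt_id l).neg.mul_const r).exp).sub_const 1
  unfold levyIntegrand
  split_ifs
  · exact (hexp.add ((hasDerivAt_id l).mul_const r)).congr_deriv (by ring)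
  · exact (hexp.add_const 0).congr_deriv (by ring)

theorem abs_deriv_levyIntegrand_le {m M l r : ℝ} (hm : 0 < m) (hl : l ∈ Icc m M) (hr : 0 < r) :
    |-r * Real.exp (-l * r) + if r < 1 then r else 0| ≤ (M + 1 / m) * min 1 (r ^ 2) := by
  have hl0 : 0 < l := hm.trans_le hl.1
  have hexp : Real.exp (-l * r) ≤ 1 := Real.exp_le_one_iff.2 (by nlinarith)
  split_ifs with h
  · have hlin : 1 - Real.exp (-l * r) ≤ l * r := by
      rw [neg_mul]; linarith [Real.one_sub_le_exp_neg (l * r)]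
    rw [min_eq_right (by nlinarith), abs_of_nonneg (by nlinarith)]
    nlinarith [mul_le_mul_of_nonneg_left hlin hr.le, hl.2, one_div_pos.2 hm]
  · have hdecay : Real.exp (-l * r) ≤ Real.exp (-(m * r)) := Real.exp_le_exp.2 <| by
      rw [neg_mul]; exact neg_le_neg (mul_le_mul_of_nonneg_right hl.1 hr.le)
    have hmax : m * r * Real.exp (-(m * r)) ≤ 1 :=
      (Real.mul_exp_neg_le_exp_neg_one _).trans (Real.exp_le_one_iff.2 (by norm_num))
    have hrexp : r * Real.exp (-(m * r)) ≤ 1 / m := by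
      rw [le_div_iff₀ hm]; linarith
    rw [min_eq_left (by nlinarith), add_zero, neg_mul, abs_neg,
      abs_of_nonneg (by positivity)]
    nlinarith [mul_le_mul_of_nonneg_left hdecay hr.le, hm.le.trans (hl.1.trans hl.2)]

theorem abs_levyIntegrand_sub_le {m M x y r : ℝ} (hm : 0 < m) (hx : x ∈ Icc m M)
    (hy : y ∈ Icc m M) (hr : 0 < r) :
    |levyIntegrand x r - levyIntegrand y r| ≤ (M + 1 / m) * min 1 (r ^ 2) * |x - y| :=
  (convex_Icc m M).norm_image_sub_le_of_norm_hasDerivWithin_le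
    (fun l _ ↦ (hasDerivAt_levyIntegrand l r).hasDerivWithinAt)
    (fun _ hl ↦ abs_deriv_levyIntegrand_le hm hl hr) hy hx

theorem lipschitzOnWith_integral_levyIntegrand {piM : Measure ℝ} (hcarr : piM (Ioi 0)ᶜ = 0)
    (hfin : ∫⁻ r, ENNReal.ofReal (min 1 (r ^ 2)) ∂piM < ⊤) {m M : ℝ} (hm : 0 < m) :
    ∃ K, LipschitzOnWith K (fun l ↦ ∫ r, levyIntegrand l r ∂piM) (Icc m M) := by
  refine ⟨_, LipschitzOnWith.of_dist_le' (K := (M + 1 / m) * ∫ r, min 1 (r ^ 2) ∂piM)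
    fun x hx y hy ↦ ?_⟩
  rw [Real.dist_eq, Real.dist_eq, ← integral_sub
    (integrable_levyIntegrand hcarr hfin (hm.le.trans hx.1))
    (integrable_levyIntegrand hcarr hfin (hm.le.trans hy.1))]
  calc |∫ r, (levyIntegrand x r - levyIntegrand y r) ∂piM|
      ≤ ∫ r, (M + 1 / m) * min 1 (r ^ 2) * |x - y| ∂piM := by
        refine norm_integral_le_of_norm_le (f := fun r ↦ levyIntegrand x r - levyIntegrand y r)
          (((integrable_min_one_sq hfin).const_mul _).mul_const _) ?_
        filter_upwards [mem_ae_iff.2 hcarr] with r hr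
        exact abs_levyIntegrand_sub_le hm hx hy hr
    _ = (M + 1 / m) * (∫ r, min 1 (r ^ 2) ∂piM) * |x - y| := by
        rw [integral_mul_const, integral_const_mul]

theorem locallyLipschitzOn_psiShape {a b : ℝ} {piM : Measure ℝ} (hcarr : piM (Ioi 0)ᶜ = 0)
    (hfin : ∫⁻ r, ENNReal.ofReal (min 1 (r ^ 2)) ∂piM < ⊤) :
    LocallyLipschitzOn (Ioi 0) (psiShape a b piM) := by
  have hpoly : LocallyLipschitz fun l : ℝ ↦ a * l + b * l ^ 2 :=
    ContDiff.locallyLipschitz (𝕂 := ℝ) (by fun_prop)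
  have hlevy : LocallyLipschitzOn (Ioi 0) fun l ↦ ∫ r, levyIntegrand l r ∂piM := by
    intro x (hx : 0 < x)
    obtain ⟨K, hK⟩ := lipschitzOnWith_integral_levyIntegrand hcarr hfin (M := x + 1) (half_pos hx)
    exact ⟨K, _, mem_nhdsWithin_of_mem_nhds (Icc_mem_nhds (half_lt_self hx) (lt_add_one x)), hK⟩
  exact hpoly.locallyLipschitzOn.add hlevy

theorem IsBranchingMechanism.locallyLipschitzOn {Ψ : ℝ → ℝ} {a b : ℝ} {piM : Measure ℝ}
    (hΨ : IsBranchingMechanism Ψ a b piM) : LocallyLipschitzOn (Ioi 0) Ψ := by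
  obtain ⟨-, hcarr, hfin, hshape⟩ := hΨ
  intro x hx
  obtain ⟨K, t, ht, hK⟩ := locallyLipschitzOn_psiShape (a := a) (b := b) hcarr hfin hx
  refine ⟨K, t ∩ Ioi 0, inter_mem ht self_mem_nhdsWithin, fun y hy z hz ↦ ?_⟩
  rw [hshape y hy.2.le, hshape z hz.2.le]
  exact hK hy.1 hz.1

namespace IsFlow

variable {Ψ : ℝ → ℝ} {u : ℝ → ℝ → ℝ} {l : ℝ}

theorem mapsTo (hu : IsFlow Ψ u) (hl : 0 < l) : MapsTo (u · l) (Ici 0) (Ioi 0) :=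
  fun s hs ↦ hu.2.1 l hl s hs

theorem continuousOn (hu : IsFlow Ψ u) (hl : 0 < l) : ContinuousOn (u · l) (Ici 0) :=
  fun s hs ↦ (hu.2.2 l hl s hs).continuousWithinAt

theorem hasDerivAt (hu : IsFlow Ψ u) (hl : 0 < l) {s : ℝ} (hs : 0 < s) :
    HasDerivAt (u · l) (-Ψ (u s l)) s :=
  (hu.2.2 l hl s hs.le).hasDerivAt (Ici_mem_nhds hs)

end IsFlow

/-- for a branching mechanism `Ψ`, a flow `u` for `Ψ`, `t ≥ 0` and `λ > 0`
with `Ψ(λ) ≠ 0`, the mechanism `Ψ` does not vanish on the closed interval with endpoints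
`u(t,λ)` and `λ`, and `∫_{u(t,λ)}^{λ} dw/Ψ(w) = t`. -/
theorem csbp_flow_integral_equation
    (Ψ : ℝ → ℝ) (a b : ℝ) (piM : Measure ℝ) (u : ℝ → ℝ → ℝ)
    (hbm : IsBranchingMechanism Ψ a b piM) (hu : IsFlow Ψ u)
    (t l : ℝ) (ht : 0 ≤ t) (hl : 0 < l) (hΨl : Ψ l ≠ 0) :
    (∀ w ∈ Set.uIcc (u t l) l, Ψ w ≠ 0) ∧
      (∫ w in (u t l)..l, (Ψ w)⁻¹) = t := by
  have hΨ := hbm.locallyLipschitzOn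
  have hu0 : u 0 l = l := hu.1 l hl
  have hcont : ContinuousOn (u · l) (Icc 0 t) := (hu.continuousOn hl).mono Icc_subset_Ici_self
  have hpos : MapsTo (u · l) (Icc 0 t) (Ioi 0) := (hu.mapsTo hl).mono_left Icc_subset_Ici_self
  have hne : ∀ s ∈ Icc 0 t, Ψ (u s l) ≠ 0 := by
    intro s hs hzero
    have hconst : u 0 l = u s l :=
      ODE_solution_eqOn_const_of_apply_eq_zero (v := fun w ↦ -Ψ w) hΨ.neg
      (hcont.mono (Icc_subset_Icc_right hs.2)) (fun τ hτ ↦ hu.hasDerivAt hl hτ.1)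
      (hpos.mono_left (Icc_subset_Icc_right hs.2)) (by simp [hzero]) ⟨le_rfl, hs.1⟩
    exact hΨl (by rwa [← hu0, hconst])
  have hcover : uIcc (u t l) l ⊆ (u · l) '' Icc 0 t := by
    have hivt := intermediate_value_uIcc (uIcc_of_le ht ▸ hcont)
    rwa [hu0, uIcc_comm, uIcc_of_le ht] at hivt
  refine ⟨fun w hw ↦ by obtain ⟨s, hs, rfl⟩ := hcover hw; exact hne s hs, ?_⟩
  have hint := integral_inv_eq_sub_of_hasDerivAt (v := fun w ↦ -Ψ w) ht hcont
    (fun s hs ↦ hu.hasDerivAt hl hs.1) (hΨ.continuousOn.neg.mono (image_subset_iff.2 hpos))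
    (fun s hs ↦ neg_ne_zero.2 (hne s hs))
  simp only [hu0, inv_neg, intervalIntegral.integral_neg, sub_zero] at hint
  rw [intervalIntegral.integral_symm, hint]
end

section
/- Let Ψ be a non-linear branching mechanism with Ψ′(0+) := lim_{λ→0+} Ψ(λ)/λ ∈ (−∞,0), and set γ := sup{λ ∈ [0,∞) : Ψ(λ) ≤ 0} ∈ (0,∞] (so Ψ < 0 on (0,γ)). Fix θ, θ′ ∈ (0,γ) and let g_θ, g_{θ′} : [0,∞) → (0,∞) satisfy ∫_{g_θ(t)}^{θ} dλ/(−Ψ(λ)) = t and ∫_{g_{θ′}(t)}^{θ′} dλ/(−Ψ(λ)) = t for all t ≥ 0. Then g_θ(t) → 0 as t → ∞, and g_θ(t)/g_{θ′}(t) → exp( Ψ′(0+) ∫_{θ′}^{θ} dλ/Ψ(λ) ) as t → ∞. -/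
open MeasureTheory Set Filter Topology
open scoped ENNReal NNReal

/-!
The Lévy–Khintchine form makes `Ψ` convex on `[0, ∞)`, hence continuous on `(0, ∞)`. Since
`Ψ(λ)/λ → c < 0` and `Ψ(w) ≤ 0` for some `w > θ`, convexity gives `Ψ < 0` on `(0, θ]`.
Beyond its first zero a convex `Ψ` grows at most linearly, so `1/(-Ψ)` is not integrable across
that zero; as `t > 0`, this forces `g_θ(t) < θ`, and boundedness of `1/(-Ψ)` on `[δ, θ]` then
forces `g_θ(t) → 0`. Finally `∫_{g_θ(t)}^{g_θ'(t)} dλ/(-Ψ(λ)) = ∫_θ^θ' dλ/(-Ψ(λ))` for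
every `t`, while near `0` we have `dλ/λ ≈ -c dλ/(-Ψ(λ))` with relative error tending to `0`; hence
`log g_θ(t) - log g_θ'(t) → c ∫_θ^θ' dλ/(-Ψ(λ))`.
-/

noncomputable def levyKhintchineIntegrand (l r : ℝ) : ℝ :=
  Real.exp (-l * r) - 1 + if r < 1 then l * r else 0

lemma abs_levyKhintchineIntegrand_le {l r : ℝ} (hl : 0 ≤ l) (hr : 0 < r) :
    |levyKhintchineIntegrand l r| ≤ max (l ^ 2) 1 * min 1 (r ^ 2) := by
  have hlr : 0 ≤ l * r := mul_nonneg hl hr.le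
  have hexp_le : Real.exp (-(l * r)) ≤ 1 := Real.exp_le_one_iff.2 (neg_nonpos.2 hlr)
  have hexp_pos : 0 < Real.exp (-(l * r)) := Real.exp_pos _
  unfold levyKhintchineIntegrand
  rw [neg_mul]
  split_ifs with hr1
  · -- `0 ≤ e^{-x} - 1 + x ≤ x (1 - e^{-x}) ≤ x²`, the middle step being `1 + x ≤ e^x`
    have h1 : 1 - l * r ≤ Real.exp (-(l * r)) := by linarith [Real.add_one_le_exp (-(l * r))]
    have h2 : Real.exp (-(l * r)) * (1 + l * r) ≤ 1 := by
      have := Real.add_one_le_exp (l * r)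
      rw [Real.exp_neg, inv_mul_le_iff₀ (Real.exp_pos _)]
      linarith
    rw [abs_of_nonneg (by linarith), min_eq_right (by nlinarith)]
    nlinarith [le_max_left (l ^ 2) 1, sq_nonneg r]
  · rw [add_zero, abs_of_nonpos (by linarith), min_eq_left (by nlinarith)]
    linarith [le_max_right (l ^ 2) 1]

lemma integrable_levyKhintchineIntegrand {piM : Measure ℝ} (hcar : piM (Ioi (0:ℝ))ᶜ = 0)
    (hfin : (∫⁻ r, ENNReal.ofReal (min 1 (r ^ 2)) ∂piM) < ⊤) {l : ℝ} (hl : 0 ≤ l) :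
    Integrable (levyKhintchineIntegrand l) piM := by
  have hmin : Integrable (fun r => min 1 (r ^ 2)) piM := by
    refine ⟨by fun_prop, ?_⟩
    rwa [hasFiniteIntegral_iff_ofReal (.of_forall fun r => le_min zero_le_one (sq_nonneg r))]
  refine (hmin.const_mul (max (l ^ 2) 1)).mono' ?_ ?_
  · exact ((by fun_prop : Measurable fun r => Real.exp (-l * r) - 1).add
      (Measurable.ite (measurableSet_lt measurable_id measurable_const)
        (measurable_const.mul measurable_id) measurable_const)).aestronglyMeasurable
  · filter_upwards [mem_ae_iff.2 hcar] with r hr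
    exact abs_levyKhintchineIntegrand_le hl hr

lemma convexOn_levyKhintchineIntegrand (r : ℝ) :
    ConvexOn ℝ univ (levyKhintchineIntegrand · r) := by
  have hexp : ConvexOn ℝ univ (fun l : ℝ => Real.exp (-l * r)) := by
    simpa [Function.comp_def, mul_comm] using
      convexOn_exp.comp_linearMap (LinearMap.mul ℝ ℝ (-r))
  refine (hexp.add_const (-1)).add ?_
  split_ifs
  · exact (LinearMap.mul ℝ ℝ |>.flip r).convexOn convex_univ
  · exact convexOn_const 0 convex_univ

theorem ConvexOn.integral {E α : Type*} [AddCommGroup E] [Module ℝ E] [MeasurableSpace α]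
    {μ : Measure α} {s : Set E} {f : E → α → ℝ} (hs : Convex ℝ s)
    (hf : ∀ r, ConvexOn ℝ s (f · r)) (hint : ∀ x ∈ s, Integrable (f x) μ) :
    ConvexOn ℝ s (fun x => ∫ r, f x r ∂μ) := by
  refine ⟨hs, fun x hx y hy a b ha hb hab => ?_⟩
  have hax : Integrable (fun r => a • f x r) μ := (hint x hx).smul a
  have hby : Integrable (fun r => b • f y r) μ := (hint y hy).smul b
  calc ∫ r, f (a • x + b • y) r ∂μ ≤ ∫ r, (a • f x r + b • f y r) ∂μ :=
        integral_mono (hint _ (hs hx hy ha hb hab)) (hax.add hby) fun r =>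
          (hf r).2 hx hy ha hb hab
    _ = a • ∫ r, f x r ∂μ + b • ∫ r, f y r ∂μ := by
        rw [integral_add hax hby, integral_smul, integral_smul]

theorem IsBranchingMechanism.convexOn {Ψ : ℝ → ℝ} {a b : ℝ} {piM : Measure ℝ}
    (hbm : IsBranchingMechanism Ψ a b piM) : ConvexOn ℝ (Ici 0) Ψ := by
  obtain ⟨hb, hcar, hfin, hshape⟩ := hbm
  have hlin : ConvexOn ℝ (Ici 0) (fun l : ℝ => a * l) :=
    (LinearMap.mul ℝ ℝ a).convexOn (convex_Ici 0)
  have hsq : ConvexOn ℝ (Ici 0) (fun l : ℝ => b * l ^ 2) := (convexOn_pow 2).smul hb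
  have hint : ConvexOn ℝ (Ici 0) (fun l => ∫ r, levyKhintchineIntegrand l r ∂piM) :=
    ConvexOn.integral (convex_Ici 0) (fun r => (convexOn_levyKhintchineIntegrand r).subset
      (subset_univ _) (convex_Ici 0)) fun l hl => integrable_levyKhintchineIntegrand hcar hfin hl
  exact ((hlin.add hsq).add hint).congr fun l hl => (hshape l hl).symm

section ConvexReal

variable {f : ℝ → ℝ} {s : Set ℝ}

lemma ConvexOn.neg_of_mem_Ioo (hf : ConvexOn ℝ s f) {x y z : ℝ} (hx : x ∈ s) (hz : z ∈ s)
    (hy : y ∈ Ioo x z) (hfx : f x < 0) (hfz : f z ≤ 0) : f y < 0 := by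
  have hslope := hf.slope_mono_adjacent hx hz hy.1 hy.2
  by_contra! hfy
  have hleft : 0 < (f y - f x) / (y - x) := div_pos (by linarith) (sub_pos.2 hy.1)
  have hright : (f z - f y) / (z - y) ≤ 0 :=
    div_nonpos_of_nonpos_of_nonneg (by linarith) (sub_nonneg.2 hy.2.le)
  linarith

/-- To the right of a zero `ζ` reached from below, a convex `f` is positive and at most linear,
so `(-f)⁻¹` has a non-integrable `-(x - ζ)⁻¹` singularity there. -/
lemma ConvexOn.not_intervalIntegrable_inv_neg (hf : ConvexOn ℝ s f) {a ζ z : ℝ} (ha : a ∈ s)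
    (hz : z ∈ s) (haζ : a < ζ) (hζz : ζ < z) (hfa : f a < 0) (hfζ : f ζ = 0) :
    ¬ IntervalIntegrable (fun l => (-f l)⁻¹) volume ζ z := by
  intro hint
  have hζ : ζ ∈ s := hf.1.ordConnected.out ha hz ⟨haζ.le, hζz.le⟩
  set K := f z / (z - ζ)
  have hbound : ∀ x ∈ Ioc ζ z, 0 < f x ∧ f x ≤ K * (x - ζ) := by
    intro x hx
    have hxs : x ∈ s := hf.1.ordConnected.out hζ hz ⟨hx.1.le, hx.2⟩
    have hlow := hf.slope_mono_adjacent ha hxs haζ hx.1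
    have hup := hf.secant_mono hζ hxs hz hx.1.ne' hζz.ne' hx.2
    simp only [hfζ, sub_zero] at hlow hup
    have hpos : 0 < (0 - f a) / (ζ - a) := div_pos (by linarith) (sub_pos.2 haζ)
    have hx' : 0 < x - ζ := sub_pos.2 hx.1
    constructor
    · exact (div_pos_iff_of_pos_right hx').1 (hpos.trans_le hlow)
    · rwa [div_le_iff₀ hx'] at hup
  have hinv : IntervalIntegrable (fun x => (x - ζ)⁻¹) volume ζ z := by
    refine (hint.const_mul K).mono_fun (by fun_prop) ?_
    rw [uIoc_of_le hζz.le, EventuallyLE, ae_restrict_iff' measurableSet_Ioc]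
    refine .of_forall fun x hx => ?_
    obtain ⟨hfx, hfxK⟩ := hbound x hx
    have hx' : 0 < x - ζ := sub_pos.2 hx.1
    have hK : 0 < K := pos_of_mul_pos_left (hfx.trans_le hfxK) hx'.le
    rw [Real.norm_eq_abs, Real.norm_eq_abs, inv_neg, mul_neg, abs_neg,
      abs_of_pos (inv_pos.2 hx'), abs_of_pos (mul_pos hK (inv_pos.2 hfx)), ← div_eq_mul_inv,
      le_div_iff₀ hfx, ← div_eq_inv_mul, div_le_iff₀ hx']
    exact hfxK
  rw [intervalIntegrable_sub_inv_iff] at hinv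
  exact hinv.elim hζz.ne fun h => h left_mem_uIcc

lemma ConvexOn.integral_inv_neg_nonneg (hf : ConvexOn ℝ s f) (hs : IsOpen s) {θ x : ℝ}
    (hθx : θ ≤ x) (hsub : Icc θ x ⊆ s) (hfθ : f θ < 0) :
    0 ≤ ∫ l in θ..x, (-f l)⁻¹ := by
  by_cases hpos : ∃ z ∈ Icc θ x, 0 < f z
  · obtain ⟨z, hz, hfz⟩ := hpos
    have hθz : θ < z := lt_of_le_of_ne hz.1 fun h => by subst h; linarith
    obtain ⟨ζ, hζ, hfζ⟩ : 0 ∈ f '' Ioo θ z :=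
      intermediate_value_Ioo hθz.le ((hf.continuousOn hs).mono
        ((Icc_subset_Icc_right hz.2).trans hsub)) ⟨hfθ, hfz⟩
    have hnot :=
      hf.not_intervalIntegrable_inv_neg (hsub ⟨le_rfl, hθx⟩) (hsub hz) hζ.1 hζ.2 hfθ hfζ
    rw [intervalIntegral.integral_undef fun h => hnot (h.mono_set ?_)]
    rw [uIcc_of_le hθx, uIcc_of_le hζ.2.le]
    exact Icc_subset_Icc hζ.1.le hz.2
  · push Not at hpos
    exact intervalIntegral.integral_nonneg hθx fun l hl => inv_nonneg.2 (neg_nonneg.2 (hpos l hl))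

lemma ConvexOn.continuousOn_inv_neg (hf : ConvexOn ℝ s f) (hs : IsOpen s) {t : Set ℝ}
    (ht : t ⊆ s) (hneg : ∀ l ∈ t, f l < 0) : ContinuousOn (fun l => (-f l)⁻¹) t :=
  ((hf.continuousOn hs).mono ht).neg.inv₀ fun l hl => (neg_pos.2 (hneg l hl)).ne'

end ConvexReal

section BackwardFlow

variable {f : ℝ → ℝ}

lemma eventually_neg_of_tendsto_div {c : ℝ}
    (hder : Tendsto (fun l => f l / l) (𝓝[>] 0) (𝓝 c)) (hc : c < 0) :
    ∀ᶠ l in 𝓝[>] 0, f l < 0 := by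
  filter_upwards [hder.eventually_lt_const hc, self_mem_nhdsWithin] with l hl hl0
  exact ((div_neg_iff.1 hl).resolve_left fun h => (not_lt.2 h.2.le) hl0).1

lemma ConvexOn.neg_of_mem_Ioc (hf : ConvexOn ℝ (Ioi 0) f) (hneg : ∀ᶠ l in 𝓝[>] 0, f l < 0)
    {θ w : ℝ} (hθw : θ < w) (hfw : f w ≤ 0) {l : ℝ} (hl : l ∈ Ioc 0 θ) : f l < 0 := by
  obtain ⟨x, hfx, hx⟩ := (hneg.and (Ioo_mem_nhdsGT hl.1)).exists
  have hlw : l < w := hl.2.trans_lt hθw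
  exact hf.neg_of_mem_Ioo hx.1 (hl.1.trans hlw) ⟨hx.2, hlw⟩ hfx hfw

lemma tendsto_nhdsGT_zero_of_integral_eq {F g : ℝ → ℝ} {θ : ℝ}
    (hF : ContinuousOn F (Ioc 0 θ)) (hg : ∀ᶠ t in atTop, g t ∈ Ioo 0 θ)
    (hgeq : ∀ᶠ t in atTop, ∫ l in g t..θ, F l = t) :
    Tendsto g atTop (𝓝[>] 0) := by
  refine tendsto_nhdsWithin_iff.2 ⟨tendsto_order.2 ⟨fun a ha => ?_, fun δ hδ => ?_⟩,
    hg.mono fun t ht => ht.1⟩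
  · exact hg.mono fun t ht => ha.trans ht.1
  · -- `F` is bounded on `[δ', θ]`, so `g t ≥ δ'` would force `t ≤ M θ`
    obtain ⟨t₀, ht₀⟩ := hg.exists
    set δ' := min δ θ
    have hδ' : 0 < δ' := lt_min hδ (ht₀.1.trans ht₀.2)
    obtain ⟨M, hM⟩ := isCompact_Icc.exists_bound_of_continuousOn
      (hF.mono fun l hl => ⟨hδ'.trans_le hl.1, hl.2⟩ : ContinuousOn F (Icc δ' θ))
    have hM0 : 0 ≤ M := (norm_nonneg _).trans (hM θ ⟨min_le_right _ _, le_rfl⟩)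
    filter_upwards [hg, hgeq, eventually_gt_atTop (M * θ)] with t hgt hgeqt ht
    by_contra! hδt
    have hbound : ‖∫ l in g t..θ, F l‖ ≤ M * |θ - g t| := by
      refine intervalIntegral.norm_integral_le_of_norm_le_const fun l hl => hM l ?_
      rw [uIoc_of_le hgt.2.le] at hl
      exact ⟨((min_le_left _ _).trans hδt).trans hl.1.le, hl.2⟩
    rw [hgeqt, abs_of_pos (sub_pos.2 hgt.2)] at hbound
    nlinarith [Real.le_norm_self t, hgt.1]

lemma ConvexOn.tendsto_nhdsGT_zero_of_integral_inv_neg_eq (hf : ConvexOn ℝ (Ioi 0) f)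
    {θ : ℝ} (hθ : 0 < θ) (hneg : ∀ l ∈ Ioc 0 θ, f l < 0) {g : ℝ → ℝ}
    (hg : ∀ t, 0 ≤ t → 0 < g t) (hgeq : ∀ t, 0 ≤ t → ∫ l in g t..θ, (-f l)⁻¹ = t) :
    Tendsto g atTop (𝓝[>] 0) := by
  refine tendsto_nhdsGT_zero_of_integral_eq
    (hf.continuousOn_inv_neg isOpen_Ioi Ioc_subset_Ioi_self hneg) ?_
    ((eventually_ge_atTop 0).mono hgeq)
  filter_upwards [eventually_gt_atTop 0] with t ht
  refine ⟨hg t ht.le, lt_of_not_ge fun hθg => ?_⟩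
  have := hf.integral_inv_neg_nonneg isOpen_Ioi hθg (fun l hl => hθ.trans_le hl.1)
    (hneg θ ⟨hθ, le_rfl⟩)
  rw [intervalIntegral.integral_symm, hgeq t ht.le] at this
  linarith

lemma intervalIntegral.integral_eq_of_integral_eq {F : ℝ → ℝ} {x x' θ θ' t : ℝ}
    (ht : t ≠ 0) (hθθ' : IntervalIntegrable F volume θ θ') (hx : ∫ l in x..θ, F l = t)
    (hx' : ∫ l in x'..θ', F l = t) : ∫ l in x..x', F l = ∫ l in θ..θ', F l := by
  have hxθ := intervalIntegrable_of_integral_ne_zero (hx ▸ ht)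
  have hx'θ' := intervalIntegrable_of_integral_ne_zero (hx' ▸ ht)
  have := integral_interval_sub_interval_comm hxθ hx'θ' ((hxθ.trans hθθ').trans hx'θ'.symm)
  rw [hx, hx', sub_self] at this
  linarith

end BackwardFlow

section LogRatio

variable {f : ℝ → ℝ}

lemma abs_log_sub_log_sub_mul_integral_le {c ε δ x y : ℝ} (hcont : ContinuousOn f (Ioo 0 δ))
    (hclose : ∀ l ∈ Ioo 0 δ, |f l / l - c| ≤ ε) (hεc : ε < -c) (hx : x ∈ Ioo 0 δ)
    (hy : y ∈ Ioo 0 δ) :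
    |Real.log x - Real.log y - c * ∫ l in x..y, (-f l)⁻¹| ≤
      ε * |∫ l in x..y, (-f l)⁻¹| := by
  wlog hxy : x ≤ y generalizing x y
  · have := this hy hx (le_of_not_ge hxy)
    rw [intervalIntegral.integral_symm y x, abs_neg, ← abs_neg]
    convert this using 2
    ring
  have hsub : uIcc x y ⊆ Ioo 0 δ := ordConnected_Ioo.uIcc_subset hx hy
  have hneg : ∀ l ∈ Ioo 0 δ, f l < 0 := fun l hl => by
    have hdiv : f l / l < 0 := by linarith [(abs_le.1 (hclose l hl)).2]
    simpa [mul_div_cancel₀ _ hl.1.ne'] using mul_neg_of_pos_of_neg hl.1 hdiv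
  have hF : ContinuousOn (fun l => (-f l)⁻¹) (uIcc x y) :=
    (hcont.mono hsub).neg.inv₀ fun l hl => (neg_pos.2 (hneg l (hsub hl))).ne'
  have hkey : Real.log x - Real.log y - c * ∫ l in x..y, (-f l)⁻¹ =
      ∫ l in x..y, (f l / l - c) * (-f l)⁻¹ := by
    have hpt : EqOn (fun l => (f l / l - c) * (-f l)⁻¹) (fun l => -l⁻¹ - c * (-f l)⁻¹)
        (uIcc x y) := fun l hl => by
        have := (hneg l (hsub hl)).ne
        have := (hsub hl).1.ne'
        field_simp
        ring
    rw [intervalIntegral.integral_congr hpt, intervalIntegral.integral_sub,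
      intervalIntegral.integral_neg, integral_inv_of_pos hx.1 hy.1,
      intervalIntegral.integral_const_mul, Real.log_div hy.1.ne' hx.1.ne']
    · ring
    · exact (continuousOn_inv₀.mono fun l hl => (hsub hl).1.ne').neg.intervalIntegrable
    · exact (hF.const_smul c).intervalIntegrable
  have hmass : 0 ≤ ∫ l in x..y, (-f l)⁻¹ := intervalIntegral.integral_nonneg hxy fun l hl =>
    inv_nonneg.2 (neg_nonneg.2 (hneg l (hsub (Icc_subset_uIcc hl))).le)
  have hpt : ∀ l ∈ Ioc x y, ‖(f l / l - c) * (-f l)⁻¹‖ ≤ ε * (-f l)⁻¹ := by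
    intro l hl
    have hl := hsub (Ioc_subset_Icc_self.trans Icc_subset_uIcc hl)
    have hF_pos : 0 < (-f l)⁻¹ := inv_pos.2 (neg_pos.2 (hneg l hl))
    rw [Real.norm_eq_abs, abs_mul, abs_of_pos hF_pos]
    exact mul_le_mul_of_nonneg_right (hclose l hl) hF_pos.le
  rw [hkey, abs_of_nonneg hmass, ← intervalIntegral.integral_const_mul]
  exact intervalIntegral.norm_integral_le_of_norm_le hxy (.of_forall hpt)
    (hF.const_smul ε).intervalIntegrable

lemma tendsto_log_sub_log_of_integral_eq {c A : ℝ} {g g' : ℝ → ℝ} (hc : c < 0)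
    (hder : Tendsto (fun l => f l / l) (𝓝[>] 0) (𝓝 c)) (hcont : ContinuousOn f (Ioi 0))
    (hg : Tendsto g atTop (𝓝[>] 0)) (hg' : Tendsto g' atTop (𝓝[>] 0))
    (hA : ∀ᶠ t in atTop, ∫ l in g t..g' t, (-f l)⁻¹ = A) :
    Tendsto (fun t => Real.log (g t) - Real.log (g' t)) atTop (𝓝 (c * A)) := by
  refine Metric.tendsto_nhds.2 fun ε hε => ?_
  set ε₁ := min (ε / (|A| + 1)) (-c / 2)
  have hε₁ : 0 < ε₁ := lt_min (by positivity) (by linarith)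
  have hε₁c : ε₁ < -c := (min_le_right _ _).trans_lt (by linarith)
  have hε₁A : ε₁ * |A| < ε := by
    calc ε₁ * |A| ≤ ε / (|A| + 1) * |A| := by gcongr; exact min_le_left _ _
      _ < ε := by rw [div_mul_eq_mul_div, div_lt_iff₀ (by positivity)]; nlinarith [abs_nonneg A]
  obtain ⟨δ, hδ, hδsub⟩ := mem_nhdsGT_iff_exists_Ioo_subset.1
    (hder (Metric.closedBall_mem_nhds c hε₁))
  filter_upwards [hg (Ioo_mem_nhdsGT hδ), hg' (Ioo_mem_nhdsGT hδ), hA] with t hgt hg't hAt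
  have := abs_log_sub_log_sub_mul_integral_le (hcont.mono Ioo_subset_Ioi_self)
    (fun l hl => hδsub hl) hε₁c hgt hg't
  rw [hAt] at this
  exact (Real.dist_eq _ _).trans_lt (this.trans_lt hε₁A)

end LogRatio

theorem csbp_grey_backward_flow_ratio_supercritical_general
    (Ψ : ℝ → ℝ) (a b : ℝ) (piM : Measure ℝ)
    (hbm : IsBranchingMechanism Ψ a b piM)
    (c : ℝ) (hc : c < 0) (hder : Tendsto (fun l => Ψ l / l) (𝓝[>] 0) (𝓝 c))
    (θ θ' : ℝ) (hθ : 0 < θ) (hθ' : 0 < θ')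
    (hθγ : ∃ l : ℝ, θ < l ∧ Ψ l ≤ 0) (hθ'γ : ∃ l : ℝ, θ' < l ∧ Ψ l ≤ 0)
    (g g' : ℝ → ℝ)
    (hg : ∀ t : ℝ, 0 ≤ t → 0 < g t) (hg' : ∀ t : ℝ, 0 ≤ t → 0 < g' t)
    (hgeq : ∀ t : ℝ, 0 ≤ t → (∫ l in (g t)..θ, (-(Ψ l))⁻¹) = t)
    (hg'eq : ∀ t : ℝ, 0 ≤ t → (∫ l in (g' t)..θ', (-(Ψ l))⁻¹) = t) :
    Tendsto g atTop (𝓝 0) ∧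
      Tendsto (fun t => g t / g' t) atTop
        (𝓝 (Real.exp (c * ∫ l in θ'..θ, (Ψ l)⁻¹))) := by
  have hconv : ConvexOn ℝ (Ioi 0) Ψ := hbm.convexOn.subset Ioi_subset_Ici_self (convex_Ioi 0)
  have hneg0 := eventually_neg_of_tendsto_div hder hc
  obtain ⟨w, hθw, hw⟩ := hθγ
  obtain ⟨w', hθ'w', hw'⟩ := hθ'γ
  have hneg : ∀ l ∈ Ioc 0 (max θ θ'), Ψ l < 0 := fun l hl => (le_max_iff.1 hl.2).elim
    (fun h => hconv.neg_of_mem_Ioc hneg0 hθw hw ⟨hl.1, h⟩)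
    (fun h => hconv.neg_of_mem_Ioc hneg0 hθ'w' hw' ⟨hl.1, h⟩)
  have hg0 := hconv.tendsto_nhdsGT_zero_of_integral_inv_neg_eq hθ
    (fun l hl => hneg l ⟨hl.1, hl.2.trans (le_max_left _ _)⟩) hg hgeq
  have hg'0 := hconv.tendsto_nhdsGT_zero_of_integral_inv_neg_eq hθ'
    (fun l hl => hneg l ⟨hl.1, hl.2.trans (le_max_right _ _)⟩) hg' hg'eq
  have hθθ' : IntervalIntegrable (fun l => (-Ψ l)⁻¹) volume θ θ' :=
    ((hconv.continuousOn_inv_neg isOpen_Ioi Ioc_subset_Ioi_self hneg).mono <|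
      ordConnected_Ioc.uIcc_subset ⟨hθ, le_max_left _ _⟩ ⟨hθ', le_max_right _ _⟩).intervalIntegrable
  have hA :
      ∀ᶠ t in atTop, ∫ l in g t..g' t, (-Ψ l)⁻¹ = ∫ l in θ..θ', (-Ψ l)⁻¹ := by
    filter_upwards [eventually_gt_atTop 0] with t ht
    exact intervalIntegral.integral_eq_of_integral_eq ht.ne' hθθ' (hgeq t ht.le) (hg'eq t ht.le)
  have hexponent : ∫ l in θ'..θ, (Ψ l)⁻¹ = ∫ l in θ..θ', (-Ψ l)⁻¹ := by
    simp only [inv_neg, intervalIntegral.integral_neg, ← intervalIntegral.integral_symm]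
  refine ⟨tendsto_nhds_of_tendsto_nhdsWithin hg0, hexponent ▸ ?_⟩
  refine ((Real.continuous_exp.tendsto _).comp (tendsto_log_sub_log_of_integral_eq hc hder
    (hconv.continuousOn isOpen_Ioi) hg0 hg'0 hA)).congr' ?_
  filter_upwards [eventually_ge_atTop 0] with t ht
  simp only [Function.comp_apply, Real.exp_sub, Real.exp_log (hg t ht), Real.exp_log (hg' t ht)]

/-- let `Ψ` be a non-linear branching mechanism with
`Ψ′(0+) = c ∈ (−∞,0)`, let `γ = sup{λ : Ψ(λ) ≤ 0}` and fix `θ, θ′ ∈ (0,γ)`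
(expressed by `θ < γ`, i.e. `∃ l > θ, Ψ(l) ≤ 0`). If `g_θ, g_{θ′} : [0,∞) → (0,∞)`
satisfy `∫_{g_θ(t)}^{θ} dλ/(−Ψ(λ)) = t` (and similarly for `θ′`), then `g_θ(t) → 0`
and `g_θ(t)/g_{θ′}(t) → exp(c ∫_{θ′}^{θ} dλ/Ψ(λ))` as `t → ∞`. -/
theorem csbp_grey_backward_flow_ratio_supercritical
    (Ψ : ℝ → ℝ) (a b : ℝ) (piM : Measure ℝ)
    (hbm : IsBranchingMechanism Ψ a b piM) (hnl : IsNonLinear b piM)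
    (c : ℝ) (hc : c < 0) (hder : Tendsto (fun l => Ψ l / l) (𝓝[>] 0) (𝓝 c))
    (θ θ' : ℝ) (hθ : 0 < θ) (hθ' : 0 < θ')
    (hθγ : ∃ l : ℝ, θ < l ∧ Ψ l ≤ 0) (hθ'γ : ∃ l : ℝ, θ' < l ∧ Ψ l ≤ 0)
    (g g' : ℝ → ℝ)
    (hg : ∀ t : ℝ, 0 ≤ t → 0 < g t) (hg' : ∀ t : ℝ, 0 ≤ t → 0 < g' t)
    (hgeq : ∀ t : ℝ, 0 ≤ t → (∫ l in (g t)..θ, (-(Ψ l))⁻¹) = t)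
    (hg'eq : ∀ t : ℝ, 0 ≤ t → (∫ l in (g' t)..θ', (-(Ψ l))⁻¹) = t) :
    Tendsto g atTop (𝓝 0) ∧
      Tendsto (fun t => g t / g' t) atTop
        (𝓝 (Real.exp (c * ∫ l in θ'..θ, (Ψ l)⁻¹))) :=
  csbp_grey_backward_flow_ratio_supercritical_general Ψ a b piM hbm c hc hder θ θ' hθ hθ' hθγ hθ'γ g
    g' hg hg' hgeq hg'eq
end

section
/- Let Ψ be a non-linear branching mechanism of finite variation type with Ψ′(0+) := lim_{λ→0+} Ψ(λ)/λ ∈ [0,∞) (so Ψ > 0 on (0,∞) and D ∈ (0,∞)). Fix θ > 0 and let g_θ : [0,∞) → (0,∞) satisfy ∫_{θ}^{g_θ(t)} dλ/Ψ(λ) = t for all t ≥ 0. Then the limit d_θ := lim_{t→∞} e^{−Dt} g_θ(t) exists in [0,∞). Moreover d_θ > 0 if and only if ∫_{(0,1)} r·log(1/r) π(dr) < ∞, and in that case log d_θ = log θ − ∫_{θ}^{∞} ( D/Ψ(λ) − 1/λ ) dλ. -/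
open MeasureTheory Set Filter Topology
open scoped ENNReal NNReal

/-!
Under finite variation `Ψ(λ) = Dλ - Φ(λ)`, where `Φ(λ) = ∫ (1 - e^{-λr}) π(dr)` is the Laplace
exponent of a driftless subordinator. Concavity of `1 - e^{-x}` makes `Φ(λ)/λ` strictly
decreasing, so `Ψ(λ)/λ` increases strictly from `Ψ'(0+) ≥ 0`: hence `Ψ > 0` on `(0,∞)`
and `h(λ) := D/Ψ(λ) - 1/λ ≥ 0`. Integrating `D/Ψ = D/λ + h` along the defining
equation of `g_θ` gives `e^{-Dt} g_θ(t) = θ exp(-∫_θ^{g_θ(t)} h)`, and `g_θ(t) → ∞`; so the limit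
exists, and it is positive iff `h` is integrable on `(θ,∞)`.

On `(θ,∞)` we have `λ ≍ Ψ(λ)`, so `h ≍ Φ(λ)/λ²`. By Tonelli, `∫_θ^∞ Φ(λ)/λ² dλ` is finite iff
`∫ π(dr) ∫_θ^∞ (1 - e^{-λr})/λ² dλ` is, and `x/(1+x) ≤ 1 - e^{-x} ≤ 2x/(1+x)` compares the inner
integral with `∫_θ^∞ r/(λ(1+λr)) dλ = r log(1 + 1/(θr))`, which is `r log(1/r) + O(r)` on `(0,1)`
and bounded on `[1,∞)`.
-/

open Real

lemma one_sub_exp_neg_nonneg {x : ℝ} (hx : 0 ≤ x) : 0 ≤ 1 - exp (-x) := by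
  simpa using exp_le_one_iff.2 (neg_nonpos.2 hx)

lemma div_one_add_le_one_sub_exp_neg {x : ℝ} (hx : 0 ≤ x) : x / (1 + x) ≤ 1 - exp (-x) := by
  have h : exp (-x) * (1 + x) ≤ 1 := by
    calc exp (-x) * (1 + x) ≤ exp (-x) * exp x := by gcongr; linarith [add_one_le_exp x]
      _ = 1 := by rw [← exp_add, neg_add_cancel, exp_zero]
  rw [div_le_iff₀ (by linarith)]
  nlinarith

lemma one_sub_exp_neg_le_two_mul_div_one_add {x : ℝ} (hx : 0 ≤ x) :
    1 - exp (-x) ≤ 2 * (x / (1 + x)) := by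
  rw [mul_div_assoc', le_div_iff₀ (by linarith)]
  rcases le_total x 1 with h | h
  · nlinarith [one_sub_le_exp_neg x]
  · nlinarith [exp_pos (-x)]

lemma strictConvexOn_exp_neg : StrictConvexOn ℝ univ (fun x : ℝ => exp (-x)) := by
  refine ⟨convex_univ, fun x _ y _ hxy a b ha hb hab => ?_⟩
  have := strictConvexOn_exp.2 (mem_univ (-x)) (mem_univ (-y)) (neg_injective.ne hxy) ha hb hab
  simpa only [smul_eq_mul, mul_neg, neg_add] using this

lemma strictAntiOn_one_sub_exp_neg_div :
    StrictAntiOn (fun x => (1 - exp (-x)) / x) (Ioi 0) := by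
  intro x hx y hy hxy
  have := strictConvexOn_exp_neg.secant_strict_mono (mem_univ 0) (mem_univ x) (mem_univ y)
    (ne_of_gt hx) (ne_of_gt hy) hxy
  simp only [neg_zero, exp_zero, sub_zero] at this
  simp only [← neg_sub (exp _), neg_div]
  exact neg_lt_neg this

lemma norm_one_sub_exp_neg_mul_le {l L r : ℝ} (hl : 0 ≤ l) (hlL : l ≤ L) (hr : 0 ≤ r) :
    ‖1 - exp (-l * r)‖ ≤ max 1 L * min 1 r := by
  have hlr : 0 ≤ l * r := mul_nonneg hl hr
  rw [neg_mul, Real.norm_of_nonneg (one_sub_exp_neg_nonneg hlr)]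
  rcases le_total r 1 with h | h
  · rw [min_eq_right h]
    nlinarith [one_sub_le_exp_neg (l * r), le_max_right 1 L]
  · rw [min_eq_left h]
    nlinarith [exp_pos (-(l * r)), le_max_left 1 L]

lemma integral_pos_of_ae_pos {α : Type*} [MeasurableSpace α] {μ : Measure α} {f : α → ℝ}
    (hμ : μ ≠ 0) (hf : ∀ᵐ x ∂μ, 0 < f x) (hfi : Integrable f μ) : 0 < ∫ x, f x ∂μ := by
  refine (integral_nonneg_of_ae (hf.mono fun _ h => h.le)).lt_of_ne fun h => hμ ?_
  have hzero := (integral_eq_zero_iff_of_nonneg_ae (hf.mono fun _ h => h.le) hfi).1 h.symm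
  rw [← ae_eq_bot, ← eventually_false_iff_eq_bot]
  filter_upwards [hf, hzero] with x hpos hx
  exact hpos.ne' hx

lemma le_of_tendsto_nhdsGT_of_monotoneOn {f : ℝ → ℝ} {a c x : ℝ} (hf : MonotoneOn f (Ioi a))
    (hc : Tendsto f (𝓝[>] a) (𝓝 c)) (hx : a < x) : c ≤ f x :=
  le_of_tendsto hc <| eventually_of_mem (Ioc_mem_nhdsGT hx) fun _ hy => hf hy.1 hx hy.2

lemma abs_log_add_inv_le {θ r : ℝ} (hθ : 0 < θ) (hr : r ∈ Ioo 0 1) :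
    |log (r + θ⁻¹)| ≤ θ⁻¹ + |log θ| := by
  have hθ' : 0 < θ⁻¹ := inv_pos.2 hθ
  have hpos : 0 < r + θ⁻¹ := by linarith [hr.1]
  have hlower : log θ⁻¹ ≤ log (r + θ⁻¹) := log_le_log hθ' (by linarith [hr.1])
  rw [log_inv] at hlower
  refine abs_le.2 ⟨?_, ?_⟩
  · linarith [le_abs_self (log θ)]
  · linarith [log_le_sub_one_of_pos hpos, hr.2, abs_nonneg (log θ)]

section LogIntegral

variable {θ r : ℝ}

lemma hasDerivAt_neg_mul_log_inv_add (hr : 0 < r) {l : ℝ} (hl : 0 < l) :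
    HasDerivAt (fun l => -r * log (l⁻¹ + r)) (l * r / (1 + l * r) / l ^ 2) l := by
  have hpos : 0 < l⁻¹ + r := by positivity
  refine ((((hasDerivAt_inv hl.ne').add_const r).log hpos.ne').const_mul (-r)).congr_deriv ?_
  field_simp

lemma tendsto_neg_mul_log_inv_add (hr : 0 < r) :
    Tendsto (fun l => -r * log (l⁻¹ + r)) atTop (𝓝 (-r * log r)) := by
  have : Tendsto (fun l : ℝ => l⁻¹ + r) atTop (𝓝 r) := by
    simpa using tendsto_inv_atTop_zero.add_const r
  exact ((continuousAt_log hr.ne').tendsto.comp this).const_mul (-r)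

lemma integrableOn_Ioi_mul_div_one_add_mul_div_sq (hθ : 0 < θ) (hr : 0 < r) :
    IntegrableOn (fun l => l * r / (1 + l * r) / l ^ 2) (Ioi θ) :=
  integrableOn_Ioi_deriv_of_nonneg' (fun l hl => hasDerivAt_neg_mul_log_inv_add hr (hθ.trans_le hl))
    (fun l hl => by have := hθ.trans hl; positivity) (tendsto_neg_mul_log_inv_add hr)

lemma integral_Ioi_mul_div_one_add_mul_div_sq (hθ : 0 < θ) (hr : 0 < r) :
    ∫ l in Ioi θ, l * r / (1 + l * r) / l ^ 2 = r * log (1 + (θ * r)⁻¹) := by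
  rw [integral_Ioi_of_hasDerivAt_of_nonneg'
    (fun l hl => hasDerivAt_neg_mul_log_inv_add hr (hθ.trans_le hl))
    (fun l hl => by have := hθ.trans hl; positivity) (tendsto_neg_mul_log_inv_add hr),
    show 1 + (θ * r)⁻¹ = (θ⁻¹ + r) / r by field_simp; ring, log_div (by positivity) hr.ne']
  ring

end LogIntegral

lemma monotoneOn_intervalIntegral_of_nonneg {f : ℝ → ℝ} {s : Set ℝ} {θ : ℝ} (hs : s.OrdConnected)
    (hcont : ContinuousOn f s) (hf : ∀ x ∈ s, 0 ≤ f x) (hθ : θ ∈ s) :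
    MonotoneOn (fun x => ∫ l in θ..x, f l) s := by
  intro x hx y hy hxy
  have hint : ∀ {u v}, u ∈ s → v ∈ s → IntervalIntegrable f volume u v := fun hu hv =>
    (hcont.mono (hs.uIcc_subset hu hv)).intervalIntegrable
  rw [← sub_nonneg, intervalIntegral.integral_interval_sub_left (hint hθ hy) (hint hθ hx)]
  exact intervalIntegral.integral_nonneg hxy fun l hl => hf l (hs.out hx hy hl)

lemma tendsto_atTop_of_monotoneOn_comp_eq {F g : ℝ → ℝ} {s : Set ℝ} (hF : MonotoneOn F s)
    (hs : ¬BddAbove s) (hgs : ∀ t, 0 ≤ t → g t ∈ s) (hFg : ∀ t, 0 ≤ t → F (g t) = t) :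
    Tendsto g atTop atTop := by
  refine tendsto_atTop.2 fun M => ?_
  obtain ⟨x, hx, hMx⟩ := not_bddAbove_iff.1 hs M
  filter_upwards [eventually_gt_atTop (max (F x) 0)] with t ht
  by_contra! hlt
  have ht0 : 0 ≤ t := (le_max_right _ _).trans ht.le
  have := hF (hgs t ht0) hx (hlt.trans hMx).le
  rw [hFg t ht0] at this
  exact (le_max_left _ _).trans_lt ht |>.not_ge this

lemma tendsto_intervalIntegral_atTop_of_not_integrableOn {h : ℝ → ℝ} {θ : ℝ}
    (hcont : ContinuousOn h (Ici θ)) (hnn : ∀ x ∈ Ici θ, 0 ≤ h x)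
    (hint : ¬IntegrableOn h (Ioi θ)) : Tendsto (fun x => ∫ l in θ..x, h l) atTop atTop := by
  have hmono := monotoneOn_intervalIntegral_of_nonneg ordConnected_Ici hcont hnn self_mem_Ici
  refine tendsto_atTop.2 fun C => ?_
  by_contra hC
  refine hint (integrableOn_Ioi_of_intervalIntegral_norm_bounded C θ
    (fun x => (hcont.mono Icc_subset_Ici_self).integrableOn_Icc.mono_set Ioc_subset_Icc_self)
    tendsto_id ?_)
  filter_upwards [eventually_ge_atTop θ] with x hx
  obtain ⟨y, hxy, hy⟩ := frequently_atTop.1 (not_eventually.1 hC) x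
  calc ∫ l in θ..x, ‖h l‖ = ∫ l in θ..x, h l :=
        intervalIntegral.integral_congr fun l hl =>
          Real.norm_of_nonneg (hnn l (by rw [uIcc_of_le hx] at hl; exact hl.1))
    _ ≤ ∫ l in θ..y, h l := hmono hx (hx.trans hxy) hxy
    _ ≤ C := (not_le.1 hy).le

section IntegralEquation

variable {Ψ : ℝ → ℝ} {D θ : ℝ}

lemma continuousOn_div_sub_one_div (hcont : ContinuousOn Ψ (Ioi 0))
    (hpos : ∀ l, 0 < l → 0 < Ψ l) : ContinuousOn (fun l => D / Ψ l - 1 / l) (Ioi 0) :=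
  (continuousOn_const.div hcont fun l hl => (hpos l hl).ne').sub
    (continuousOn_const.div continuousOn_id fun _ hl => (mem_Ioi.1 hl).ne')

lemma div_sub_one_div_nonneg {l : ℝ} (hl : 0 < l) (hΨl : 0 < Ψ l) (hle : Ψ l ≤ D * l) :
    0 ≤ D / Ψ l - 1 / l := by
  rw [sub_nonneg, div_le_div_iff₀ hl hΨl, one_mul]
  exact hle

lemma exp_neg_mul_mul_eq_of_intervalIntegral_inv_eq (hθ : 0 < θ)
    (hcont : ContinuousOn Ψ (Ioi 0)) (hpos : ∀ l, 0 < l → 0 < Ψ l) {x t : ℝ} (hx : 0 < x)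
    (ht : ∫ l in θ..x, (Ψ l)⁻¹ = t) :
    exp (-D * t) * x = θ * exp (-∫ l in θ..x, (D / Ψ l - 1 / l)) := by
  have hsub : uIcc θ x ⊆ Ioi 0 := fun l hl => lt_of_lt_of_le (lt_min hθ hx) hl.1
  have hΨint : IntervalIntegrable (fun l => D / Ψ l) volume θ x :=
    (continuousOn_const.div hcont fun l hl => (hpos l hl).ne').mono hsub |>.intervalIntegrable
  have hinvint : IntervalIntegrable (fun l : ℝ => 1 / l) volume θ x :=
    (continuousOn_const.div continuousOn_id fun l hl => (mem_Ioi.1 hl).ne').mono hsub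
      |>.intervalIntegrable
  simp_rw [intervalIntegral.integral_sub hΨint hinvint, div_eq_mul_inv D,
    intervalIntegral.integral_const_mul, ht, integral_one_div_of_pos hθ hx, neg_sub, exp_sub,
    exp_log (div_pos hx hθ), neg_mul, exp_neg]
  field_simp

open Classical in
lemma tendsto_exp_neg_mul_mul_of_intervalIntegral_inv_eq (hθ : 0 < θ)
    (hcont : ContinuousOn Ψ (Ioi 0)) (hpos : ∀ l, 0 < l → 0 < Ψ l)
    (hle : ∀ l, 0 < l → Ψ l ≤ D * l) {g : ℝ → ℝ} (hg : ∀ t, 0 ≤ t → 0 < g t)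
    (hgeq : ∀ t, 0 ≤ t → ∫ l in θ..(g t), (Ψ l)⁻¹ = t) :
    Tendsto (fun t => exp (-D * t) * g t) atTop
      (𝓝 (if IntegrableOn (fun l => D / Ψ l - 1 / l) (Ioi θ)
        then θ * exp (-∫ l in Ioi θ, (D / Ψ l - 1 / l)) else 0)) := by
  have hinvcont : ContinuousOn (fun l => (Ψ l)⁻¹) (Ioi 0) :=
    hcont.inv₀ fun l hl => (hpos l hl).ne'
  have hg_tendsto : Tendsto g atTop atTop :=
    tendsto_atTop_of_monotoneOn_comp_eq
      (monotoneOn_intervalIntegral_of_nonneg ordConnected_Ioi hinvcont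
        (fun l hl => (inv_pos.2 (hpos l hl)).le) hθ)
      (not_bddAbove_Ioi 0) hg hgeq
  have hid : (fun t => θ * exp (-∫ l in θ..(g t), (D / Ψ l - 1 / l))) =ᶠ[atTop]
      fun t => exp (-D * t) * g t :=
    eventually_atTop.2 ⟨0, fun t ht =>
      (exp_neg_mul_mul_eq_of_intervalIntegral_inv_eq hθ hcont hpos (hg t ht) (hgeq t ht)).symm⟩
  refine Tendsto.congr' hid ?_
  split_ifs with hint
  · exact ((intervalIntegral_tendsto_integral_Ioi θ hint hg_tendsto).neg.rexp).const_mul θ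
  · have hcont' := (continuousOn_div_sub_one_div (D := D) hcont hpos).mono (Ici_subset_Ioi.2 hθ)
    have hnn : ∀ l ∈ Ici θ, 0 ≤ D / Ψ l - 1 / l := fun l hl =>
      have hl0 : 0 < l := hθ.trans_le hl
      div_sub_one_div_nonneg hl0 (hpos l hl0) (hle l hl0)
    simpa using ((tendsto_exp_atBot.comp (tendsto_neg_atTop_atBot.comp
      ((tendsto_intervalIntegral_atTop_of_not_integrableOn hcont' hnn hint).comp
        hg_tendsto))).const_mul θ)

end IntegralEquation

def IsSubordinatorLevyMeasure (ν : Measure ℝ) : Prop :=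
  (∀ᵐ r ∂ν, 0 < r) ∧ Integrable (fun r => min 1 r) ν

noncomputable def laplaceExponent (ν : Measure ℝ) (l : ℝ) : ℝ :=
  ∫ r, (1 - exp (-l * r)) ∂ν

namespace IsSubordinatorLevyMeasure

variable {ν : Measure ℝ}

lemma measure_Ici_lt_top (hν : IsSubordinatorLevyMeasure ν) {ρ : ℝ} (hρ : 0 < ρ) :
    ν (Ici ρ) < ∞ := by
  refine (measure_mono fun r (hr : ρ ≤ r) => ?_).trans_lt
    (hν.2.measure_norm_ge_lt_top (lt_min one_pos hρ))
  have : min 1 ρ ≤ min 1 r := min_le_min_left 1 hr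
  rwa [mem_ofPred_eq, Real.norm_of_nonneg ((le_min zero_le_one hρ.le).trans this)]

lemma sFinite (hν : IsSubordinatorLevyMeasure ν) : SFinite ν := by
  have hpos : ∀ᵐ r ∂ν, ENNReal.ofReal (min 1 r) ≠ 0 := by
    filter_upwards [hν.1] with r hr
    simpa using lt_min one_pos hr
  have : IsFiniteMeasure (ν.withDensity fun r => ENNReal.ofReal (min 1 r)) :=
    isFiniteMeasure_withDensity hν.2.lintegral_lt_top.ne
  exact sFinite_of_absolutelyContinuous
    (withDensity_absolutelyContinuous' (by fun_prop) hpos)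

lemma integrableOn_Ioo_id (hν : IsSubordinatorLevyMeasure ν) :
    IntegrableOn (fun r => r) (Ioo 0 1) ν :=
  hν.2.integrableOn.congr_fun (fun _ hr => min_eq_right hr.2.le) measurableSet_Ioo

lemma integrable_one_sub_exp (hν : IsSubordinatorLevyMeasure ν) {l : ℝ} (hl : 0 ≤ l) :
    Integrable (fun r => 1 - exp (-l * r)) ν :=
  (hν.2.const_mul (max 1 l)).mono' (by fun_prop)
    (hν.1.mono fun _ hr => norm_one_sub_exp_neg_mul_le hl le_rfl hr.le)

lemma laplaceExponent_nonneg (hν : IsSubordinatorLevyMeasure ν) {l : ℝ} (hl : 0 ≤ l) :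
    0 ≤ laplaceExponent ν l :=
  integral_nonneg_of_ae <| hν.1.mono fun r hr => by
    simpa [neg_mul] using one_sub_exp_neg_nonneg (mul_nonneg hl hr.le)

lemma strictAntiOn_laplaceExponent_div (hν : IsSubordinatorLevyMeasure ν) (hν0 : ν ≠ 0) :
    StrictAntiOn (fun l => laplaceExponent ν l / l) (Ioi 0) := by
  intro m hm l hl hml
  have hint : ∀ {x : ℝ}, 0 < x → Integrable (fun r => (1 - exp (-x * r)) / x) ν :=
    fun hx => (hν.integrable_one_sub_exp hx.le).div_const _
  suffices 0 < ∫ r, ((1 - exp (-m * r)) / m - (1 - exp (-l * r)) / l) ∂ν by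
    rwa [integral_sub (hint hm) (hint hl), integral_div, integral_div, sub_pos] at this
  refine integral_pos_of_ae_pos hν0 (hν.1.mono fun r hr => ?_) ((hint hm).sub (hint hl))
  have key := strictAntiOn_one_sub_exp_neg_div (mul_pos hm hr) (mul_pos hl hr)
    (mul_lt_mul_of_pos_right hml hr)
  rw [sub_pos, ← div_lt_div_iff_of_pos_right hr, div_div, div_div, neg_mul, neg_mul]
  exact key

lemma continuousOn_laplaceExponent (hν : IsSubordinatorLevyMeasure ν) :
    ContinuousOn (laplaceExponent ν) (Ioi 0) := by
  intro x hx
  have hcont : ContinuousOn (laplaceExponent ν) (Ioo 0 (x + 1)) :=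
    continuousOn_of_dominated (fun _ _ => by fun_prop)
      (fun l hl => hν.1.mono fun _ hr => norm_one_sub_exp_neg_mul_le hl.1.le hl.2.le hr.le)
      (hν.2.const_mul _) (ae_of_all _ fun _ => by fun_prop)
  exact (hcont.continuousAt (Ioo_mem_nhds hx (lt_add_one x))).continuousWithinAt

lemma integrableOn_laplaceExponent_div_sq_iff
    (hν : IsSubordinatorLevyMeasure ν) {θ : ℝ} (hθ : 0 < θ) :
    IntegrableOn (fun l => laplaceExponent ν l / l ^ 2) (Ioi θ) ↔
      Integrable (fun r => r * log (1 + (θ * r)⁻¹)) ν := by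
  have := hν.sFinite
  let F : ℝ × ℝ → ℝ := fun p => (1 - exp (-p.1 * p.2)) / p.1 ^ 2
  let G : ℝ × ℝ → ℝ := fun p => p.1 * p.2 / (1 + p.1 * p.2) / p.1 ^ 2
  have hF : AEStronglyMeasurable F ((volume.restrict (Ioi θ)).prod ν) := by
    fun_prop
  have hG : AEStronglyMeasurable G ((volume.restrict (Ioi θ)).prod ν) := by
    fun_prop
  have hpos : ∀ᵐ p ∂(volume.restrict (Ioi θ)).prod ν, p ∈ Ioi 0 ×ˢ Ioi 0 := by
    rw [Measure.ae_prod_mem_iff_ae_ae_mem (measurableSet_Ioi.prod measurableSet_Ioi)]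
    filter_upwards [ae_restrict_mem measurableSet_Ioi] with l hl
    filter_upwards [hν.1] with r hr
    exact ⟨hθ.trans hl, hr⟩
  have hGF : ∀ᵐ p ∂(volume.restrict (Ioi θ)).prod ν, 0 ≤ G p ∧ G p ≤ F p ∧ F p ≤ 2 * G p := by
    filter_upwards [hpos] with p ⟨h1, h2⟩
    have := mem_Ioi.1 h1
    have := mem_Ioi.1 h2
    have hx : 0 ≤ p.1 * p.2 := by positivity
    refine ⟨by positivity, ?_, ?_⟩
    · exact div_le_div_of_nonneg_right
        (by simpa [neg_mul] using div_one_add_le_one_sub_exp_neg hx) (by positivity)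
    · rw [mul_div_assoc']
      exact div_le_div_of_nonneg_right
        (by simpa [neg_mul] using one_sub_exp_neg_le_two_mul_div_one_add hx) (by positivity)
  calc IntegrableOn (fun l => laplaceExponent ν l / l ^ 2) (Ioi θ)
      ↔ Integrable F ((volume.restrict (Ioi θ)).prod ν) := by
        have hfib : ∀ᵐ l ∂volume.restrict (Ioi θ), Integrable (fun r => F (l, r)) ν ∧
            ∫ r, ‖F (l, r)‖ ∂ν = laplaceExponent ν l / l ^ 2 := by
          filter_upwards [ae_restrict_mem measurableSet_Ioi] with l hl
          have hl0 : 0 ≤ l := (hθ.trans hl).le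
          refine ⟨(hν.integrable_one_sub_exp hl0).div_const (l ^ 2), ?_⟩
          rw [laplaceExponent, ← integral_div]
          refine integral_congr_ae (hν.1.mono fun r hr => Real.norm_of_nonneg ?_)
          have := one_sub_exp_neg_nonneg (mul_nonneg hl0 hr.le)
          rw [← neg_mul] at this
          positivity
        rw [integrable_prod_iff hF, and_iff_right (hfib.mono fun _ h => h.1)]
        exact integrable_congr (hfib.mono fun _ h => h.2.symm)
    _ ↔ Integrable G ((volume.restrict (Ioi θ)).prod ν) :=
        ⟨fun h => h.mono' hG (hGF.mono fun p hp => by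
            rw [Real.norm_of_nonneg hp.1]; exact hp.2.1),
          fun h => (h.const_mul 2).mono' hF (hGF.mono fun p hp => by
            rw [Real.norm_of_nonneg (hp.1.trans hp.2.1)]; exact hp.2.2)⟩
    _ ↔ Integrable (fun r => r * log (1 + (θ * r)⁻¹)) ν := by
        have hfib : ∀ᵐ r ∂ν, Integrable (fun l => G (l, r)) (volume.restrict (Ioi θ)) ∧
            ∫ l in Ioi θ, ‖G (l, r)‖ = r * log (1 + (θ * r)⁻¹) := by
          filter_upwards [hν.1] with r hr
          refine ⟨integrableOn_Ioi_mul_div_one_add_mul_div_sq hθ hr, ?_⟩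
          rw [← integral_Ioi_mul_div_one_add_mul_div_sq hθ hr]
          refine setIntegral_congr_fun measurableSet_Ioi fun l hl => Real.norm_of_nonneg ?_
          have := hθ.trans hl
          positivity
        rw [integrable_prod_iff' hG, and_iff_right (hfib.mono fun _ h => h.1)]
        exact integrable_congr (hfib.mono fun _ h => h.2)

lemma integrable_mul_log_one_add_inv_iff
    (hν : IsSubordinatorLevyMeasure ν) {θ : ℝ} (hθ : 0 < θ) :
    Integrable (fun r => r * log (1 + (θ * r)⁻¹)) ν ↔
      (∫⁻ r in Ioo 0 1, ENNReal.ofReal (r * log (1 / r)) ∂ν) < ⊤ := by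
  have hlarge : IntegrableOn (fun r => r * log (1 + (θ * r)⁻¹)) (Ici 1) ν := by
    refine IntegrableOn.of_bound (hν.measure_Ici_lt_top one_pos) (by fun_prop) θ⁻¹
      ((ae_restrict_mem measurableSet_Ici).mono fun r (hr : 1 ≤ r) => ?_)
    have hr0 : 0 < r := one_pos.trans_le hr
    have hx : 1 ≤ 1 + (θ * r)⁻¹ := le_add_of_nonneg_right (by positivity)
    rw [Real.norm_of_nonneg (mul_nonneg hr0.le (log_nonneg hx))]
    calc r * log (1 + (θ * r)⁻¹) ≤ r * (1 + (θ * r)⁻¹ - 1) :=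
          mul_le_mul_of_nonneg_left (log_le_sub_one_of_pos (by linarith)) hr0.le
      _ = θ⁻¹ := by field_simp; ring
  have hsmall : IntegrableOn (fun r => r * log (r + θ⁻¹)) (Ioo 0 1) ν := by
    refine (hν.integrableOn_Ioo_id.mul_const (θ⁻¹ + |log θ|)).mono' (by fun_prop)
      ((ae_restrict_mem measurableSet_Ioo).mono fun r hr => ?_)
    rw [norm_mul, Real.norm_of_nonneg hr.1.le, Real.norm_eq_abs]
    exact mul_le_mul_of_nonneg_left (abs_log_add_inv_le hθ hr) hr.1.le
  have hsplit : ∀ r ∈ Ioo (0 : ℝ) 1,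
      r * log (1 + (θ * r)⁻¹) = r * log (1 / r) + r * log (r + θ⁻¹) := by
    intro r ⟨hr0, _⟩
    rw [← mul_add, ← log_mul (by positivity) (by positivity)]
    congr 2
    field_simp
  calc Integrable (fun r => r * log (1 + (θ * r)⁻¹)) ν
      ↔ IntegrableOn (fun r => r * log (1 + (θ * r)⁻¹)) (Ioo 0 1 ∪ Ici 1) ν := by
        rw [Ioo_union_Ici_eq_Ioi zero_lt_one, IntegrableOn,
          Measure.restrict_eq_self_of_ae_mem (s := Ioi 0) hν.1]
    _ ↔ IntegrableOn (fun r => r * log (1 / r)) (Ioo 0 1) ν := by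
        rw [integrableOn_union, and_iff_left hlarge,
          integrableOn_congr_fun hsplit measurableSet_Ioo, IntegrableOn, integrable_add_iff_integrable_left' hsmall]
        rfl
    _ ↔ _ := by
        rw [lt_top_iff_ne_top, lintegral_ofReal_ne_top_iff_integrable (by fun_prop)
          ((ae_restrict_mem measurableSet_Ioo).mono fun r hr =>
            mul_nonneg hr.1.le (log_nonneg (one_le_one_div hr.1 hr.2.le)))]
        rfl

end IsSubordinatorLevyMeasure

lemma IsBranchingMechanism.isSubordinatorLevyMeasure {Ψ : ℝ → ℝ} {a b : ℝ} {piM : Measure ℝ}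
    (hbm : IsBranchingMechanism Ψ a b piM) (hfv : FiniteVariationType b piM) :
    IsSubordinatorLevyMeasure piM := by
  obtain ⟨-, hsupp, hsq, -⟩ := hbm
  have hpos : ∀ᵐ r ∂piM, 0 < r := mem_ae_iff.2 hsupp
  have hsq' : Integrable (fun r => min 1 (r ^ 2)) piM :=
    (lintegral_ofReal_ne_top_iff_integrable (by fun_prop)
      (ae_of_all _ fun r => le_min zero_le_one (sq_nonneg r))).1 hsq.ne
  have hid : IntegrableOn (fun r => r) (Ioo 0 1) piM :=
    (lintegral_ofReal_ne_top_iff_integrable (by fun_prop)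
      ((ae_restrict_mem measurableSet_Ioo).mono fun r hr => hr.1.le)).1 hfv.2.ne
  refine ⟨hpos, ((hid.integrable_indicator measurableSet_Ioo).add hsq').mono' (by fun_prop) ?_⟩
  filter_upwards [hpos] with r hr
  rw [Real.norm_of_nonneg (le_min zero_le_one hr.le), Pi.add_apply]
  rcases lt_or_ge r 1 with h | h
  · rw [indicator_of_mem (show r ∈ Ioo 0 1 from ⟨hr, h⟩), min_eq_right h.le]
    exact le_add_of_nonneg_right (le_min zero_le_one (sq_nonneg r))
  · rw [indicator_of_notMem fun h' => (not_lt.2 h) h'.2, min_eq_left h,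
      min_eq_left (by nlinarith), zero_add]

lemma IsBranchingMechanism.eqOn_sub_laplaceExponent {Ψ : ℝ → ℝ} {a b : ℝ} {piM : Measure ℝ}
    (hbm : IsBranchingMechanism Ψ a b piM) (hfv : FiniteVariationType b piM) :
    EqOn Ψ (fun l => Dconst a piM * l - laplaceExponent piM l) (Ici 0) := by
  have hν := hbm.isSubordinatorLevyMeasure hfv
  intro l (hl : 0 ≤ l)
  dsimp only
  have hcompensator : Integrable ((Ioo 0 1).indicator fun r => l * r) piM :=
    IntegrableOn.integrable_indicator (hν.integrableOn_Ioo_id.const_mul l) measurableSet_Ioo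
  have hjump : ∫ r, (exp (-l * r) - 1 + (if r < 1 then l * r else 0)) ∂piM
      = ∫ r, ((Ioo 0 1).indicator (fun r => l * r) r - (1 - exp (-l * r))) ∂piM := by
    refine integral_congr_ae (hν.1.mono fun r hr => ?_)
    by_cases h : r < 1
    · simp [h, hr]; ring
    · simp [h]
  rw [hbm.2.2.2 l hl, psiShape, hjump, integral_sub hcompensator (hν.integrable_one_sub_exp hl),
    integral_indicator measurableSet_Ioo, integral_const_mul, hfv.1, Dconst, laplaceExponent]
  ring

section Mechanism

variable {Ψ : ℝ → ℝ} {D : ℝ} {ν : Measure ℝ}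

lemma strictMonoOn_div_of_eqOn_sub_laplaceExponent (hν : IsSubordinatorLevyMeasure ν)
    (hν0 : ν ≠ 0) (hΨ : EqOn Ψ (fun l => D * l - laplaceExponent ν l) (Ici 0)) :
    StrictMonoOn (fun l => Ψ l / l) (Ioi 0) := by
  have hdiv : ∀ l, 0 < l → Ψ l / l = D - laplaceExponent ν l / l := fun l hl => by
    rw [hΨ hl.le]
    field_simp
  intro m hm l hl hml
  simp only [hdiv m hm, hdiv l hl]
  linarith [hν.strictAntiOn_laplaceExponent_div hν0 hm hl hml]

lemma le_mul_of_eqOn_sub_laplaceExponent (hν : IsSubordinatorLevyMeasure ν)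
    (hΨ : EqOn Ψ (fun l => D * l - laplaceExponent ν l) (Ici 0)) {l : ℝ} (hl : 0 ≤ l) :
    Ψ l ≤ D * l := by
  rw [hΨ hl]
  linarith [hν.laplaceExponent_nonneg hl]

lemma pos_of_eqOn_sub_laplaceExponent (hν : IsSubordinatorLevyMeasure ν) (hν0 : ν ≠ 0)
    (hΨ : EqOn Ψ (fun l => D * l - laplaceExponent ν l) (Ici 0)) {c : ℝ} (hc : 0 ≤ c)
    (hder : Tendsto (fun l => Ψ l / l) (𝓝[>] 0) (𝓝 c)) {l : ℝ} (hl : 0 < l) : 0 < Ψ l := by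
  have hmono := strictMonoOn_div_of_eqOn_sub_laplaceExponent hν hν0 hΨ
  have hhalf : 0 < l / 2 := half_pos hl
  have : Ψ (l / 2) / (l / 2) < Ψ l / l := hmono hhalf hl (half_lt_self hl)
  have := le_of_tendsto_nhdsGT_of_monotoneOn hmono.monotoneOn hder hhalf
  exact (div_pos_iff_of_pos_right hl).1 (by linarith)

lemma continuousOn_of_eqOn_sub_laplaceExponent (hν : IsSubordinatorLevyMeasure ν)
    (hΨ : EqOn Ψ (fun l => D * l - laplaceExponent ν l) (Ici 0)) : ContinuousOn Ψ (Ioi 0) :=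
  ((continuousOn_const.mul continuousOn_id).sub hν.continuousOn_laplaceExponent).congr
    fun _ hl => hΨ (mem_Ici_of_Ioi hl)

lemma integrableOn_div_sub_one_div_iff (hν : IsSubordinatorLevyMeasure ν) (hν0 : ν ≠ 0)
    (hΨ : EqOn Ψ (fun l => D * l - laplaceExponent ν l) (Ici 0)) (hpos : ∀ l, 0 < l → 0 < Ψ l)
    {θ : ℝ} (hθ : 0 < θ) :
    IntegrableOn (fun l => D / Ψ l - 1 / l) (Ioi θ) ↔
      IntegrableOn (fun l => laplaceExponent ν l / l ^ 2) (Ioi θ) := by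
  have hmono := (strictMonoOn_div_of_eqOn_sub_laplaceExponent hν hν0 hΨ).monotoneOn
  set m := Ψ θ / θ
  have hm : 0 < m := div_pos (hpos θ hθ) hθ
  have hbounds : ∀ l ∈ Ioi θ, 0 ≤ D / Ψ l - 1 / l ∧
      m * (D / Ψ l - 1 / l) ≤ laplaceExponent ν l / l ^ 2 ∧
      laplaceExponent ν l / l ^ 2 ≤ D * (D / Ψ l - 1 / l) := by
    intro l hl
    have hl0 : 0 < l := hθ.trans hl
    have hΨl := hpos l hl0
    have hlower : m ≤ Ψ l / l := hmono hθ hl0 hl.le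
    have hupper : Ψ l / l ≤ D :=
      (div_le_iff₀ hl0).2 (le_mul_of_eqOn_sub_laplaceExponent hν hΨ hl0.le)
    have hid : laplaceExponent ν l / l ^ 2 = (D / Ψ l - 1 / l) * (Ψ l / l) := by
      have := hΨ hl0.le
      simp only at this
      field_simp
      linarith
    have hnonneg := div_sub_one_div_nonneg hl0 hΨl ((div_le_iff₀ hl0).1 hupper)
    rw [hid]
    exact ⟨hnonneg, by rw [mul_comm]; gcongr, by rw [mul_comm D]; gcongr⟩
  have hcont : ContinuousOn Ψ (Ioi 0) := continuousOn_of_eqOn_sub_laplaceExponent hν hΨ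
  have hsub : Ioi θ ⊆ Ioi 0 := Ioi_subset_Ioi hθ.le
  have hmeas_h : AEStronglyMeasurable (fun l => D / Ψ l - 1 / l) (volume.restrict (Ioi θ)) :=
    (continuousOn_div_sub_one_div hcont hpos).mono hsub |>.aestronglyMeasurable measurableSet_Ioi
  have hmeas_Φ : AEStronglyMeasurable (fun l => laplaceExponent ν l / l ^ 2)
      (volume.restrict (Ioi θ)) :=
    (hν.continuousOn_laplaceExponent.div (continuousOn_pow 2)
      fun l hl => pow_ne_zero 2 (mem_Ioi.1 hl).ne').mono hsub
      |>.aestronglyMeasurable measurableSet_Ioi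
  have hb := (ae_restrict_mem (μ := volume) measurableSet_Ioi).mono hbounds
  refine ⟨fun h => (h.const_mul D).mono' hmeas_Φ (hb.mono fun l hl => ?_),
    fun h => (h.const_mul m⁻¹).mono' hmeas_h (hb.mono fun l hl => ?_)⟩
  · rw [Real.norm_of_nonneg (le_trans (mul_nonneg hm.le hl.1) hl.2.1)]
    exact hl.2.2
  · rw [Real.norm_of_nonneg hl.1, inv_mul_eq_div, le_div_iff₀ hm, mul_comm]
    exact hl.2.1

end Mechanism

/-- let `Ψ` be a non-linear branching mechanism of finite variation type
with `Ψ′(0+) = c ∈ [0,∞)`. Fix `θ > 0` and let `g_θ : [0,∞) → (0,∞)` satisfy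
`∫_{θ}^{g_θ(t)} dλ/Ψ(λ) = t`. Then `d_θ := lim_{t→∞} e^{−Dt} g_θ(t)` exists in `[0,∞)`;
`d_θ > 0` iff `∫_{(0,1)} r·log(1/r) π(dr) < ∞`, and in that case
`log d_θ = log θ − ∫_{θ}^{∞} (D/Ψ(λ) − 1/λ) dλ`. -/
theorem csbp_grey_drift_existence_and_formula
    (Ψ : ℝ → ℝ) (a b : ℝ) (piM : Measure ℝ)
    (hbm : IsBranchingMechanism Ψ a b piM) (hnl : IsNonLinear b piM)
    (hfv : FiniteVariationType b piM)
    (c : ℝ) (hc : 0 ≤ c) (hder : Tendsto (fun l => Ψ l / l) (𝓝[>] 0) (𝓝 c))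
    (θ : ℝ) (hθ : 0 < θ)
    (g : ℝ → ℝ) (hg : ∀ t : ℝ, 0 ≤ t → 0 < g t)
    (hgeq : ∀ t : ℝ, 0 ≤ t → (∫ l in θ..(g t), (Ψ l)⁻¹) = t) :
    ∃ dθ : ℝ, 0 ≤ dθ ∧
      Tendsto (fun t => Real.exp (-(Dconst a piM) * t) * g t) atTop (𝓝 dθ) ∧
      (0 < dθ ↔
        (∫⁻ r in Set.Ioo (0:ℝ) 1, ENNReal.ofReal (r * Real.log (1 / r)) ∂piM) < ⊤) ∧
      ((∫⁻ r in Set.Ioo (0:ℝ) 1, ENNReal.ofReal (r * Real.log (1 / r)) ∂piM) < ⊤ →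
        Real.log dθ =
          Real.log θ - ∫ l in Set.Ioi θ, (Dconst a piM / Ψ l - 1 / l)) := by
  have hν := hbm.isSubordinatorLevyMeasure hfv
  have hν0 : piM ≠ 0 := hnl.resolve_left (by rw [hfv.1]; exact lt_irrefl 0)
  have hΨ := hbm.eqOn_sub_laplaceExponent hfv
  have hpos : ∀ l, 0 < l → 0 < Ψ l := fun l =>
    pos_of_eqOn_sub_laplaceExponent hν hν0 hΨ hc hder
  have hgrey : IntegrableOn (fun l => Dconst a piM / Ψ l - 1 / l) (Ioi θ) ↔
      (∫⁻ r in Ioo 0 1, ENNReal.ofReal (r * log (1 / r)) ∂piM) < ⊤ := by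
    rw [integrableOn_div_sub_one_div_iff hν hν0 hΨ hpos hθ,
      hν.integrableOn_laplaceExponent_div_sq_iff hθ, hν.integrable_mul_log_one_add_inv_iff hθ]
  rw [← hgrey]
  refine ⟨_, ?_, tendsto_exp_neg_mul_mul_of_intervalIntegral_inv_eq hθ
    (continuousOn_of_eqOn_sub_laplaceExponent hν hΨ) hpos
    (fun l hl => le_mul_of_eqOn_sub_laplaceExponent hν hΨ hl.le) hg hgeq, ?_, fun hint => ?_⟩
  · split_ifs <;> positivity
  · split_ifs with hint
    · exact iff_of_true (by positivity) hint
    · exact iff_of_false (lt_irrefl 0) hint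
  · rw [if_pos hint, log_mul hθ.ne' (exp_pos _).ne', log_exp, sub_eq_add_neg]
end
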